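/- arXiv:2003.05589 — 5 statements merged into one kernel-verified Lean document; each statement's English description precedes it below -/
import Mathlib

section
/- Let V be a real vector space of dimension r, Λ ⊂ V a lattice (free abelian subgroup of rank r spanning V), and q : V → ℝ a positive definite quadratic form. Let λ = min{q(x) : x ∈ Λ, x ≠ 0}. Then for any positive real T, the number of lattice points x ∈ Λ with q(x) ≤ T is at most (2·√(T/λ) + 1)^r. -/
/-!
Put `n = ⌊2√(T/λ)⌋ + 1` and reduce lattice coordinates modulo `n`. Two points `x ≠ y` of the
ellipsoid `q ≤ T` with the same residues differ by `n • z` for a nonzero lattice point `z`,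
so `n² λ ≤ q (x - y) ≤ 2 (q x + q y) ≤ 4T < n² λ`. Hence reduction is injective on the
ellipsoid, which therefore has at most `nʳ ≤ (2√(T/λ) + 1)ʳ` lattice points.
-/

namespace QuadraticMap

variable {R M N : Type*} [CommRing R] [AddCommGroup M] [Module R M] [AddCommGroup N]
  [Module R N]

theorem map_add_add_map_sub (Q : QuadraticMap R M N) (x y : M) :
    Q (x + y) + Q (x - y) = 2 • (Q x + Q y) := by
  obtain ⟨B, hB⟩ := Q.exists_companion
  rw [sub_eq_add_neg, hB, hB, Q.map_neg, LinearMap.map_neg, two_nsmul]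
  abel

theorem map_sub_le [PartialOrder N] [IsOrderedAddMonoid N] {Q : QuadraticMap R M N}
    (hQ : ∀ v, 0 ≤ Q v) (x y : M) : Q (x - y) ≤ 2 • (Q x + Q y) := by
  rw [← map_add_add_map_sub]
  exact le_add_of_nonneg_left (hQ _)

end QuadraticMap

namespace Module.Basis

variable {ι M : Type*} [Fintype ι] [AddCommGroup M]

theorem exists_sub_eq_nsmul_of_repr_cast_eq (b : Basis ι ℤ M) {n : ℕ} {x y : M}
    (h : ∀ i, (b.repr x i : ZMod n) = b.repr y i) : ∃ z, x - y = n • z := by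
  have hdvd : ∀ i, (n : ℤ) ∣ b.repr (x - y) i := fun i => by
    rw [← ZMod.intCast_zmod_eq_zero_iff_dvd, map_sub, Finsupp.sub_apply, Int.cast_sub, h i,
      sub_self]
  refine ⟨∑ i, (b.repr (x - y) i / n) • b i, ?_⟩
  simp_rw [← natCast_zsmul, Finset.smul_sum, smul_smul, Int.mul_ediv_cancel' (hdvd _)]
  exact (b.sum_repr _).symm

end Module.Basis

theorem Submodule.finite_and_natCard_le_of_sub_eq_nsmul {ι V : Type*} [Fintype ι]
    [AddCommGroup V] {Λ : Submodule ℤ V} (b : Module.Basis ι ℤ Λ) (n : ℕ) [NeZero n]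
    {S : Set V} (hSΛ : S ⊆ Λ) (hS : ∀ x ∈ S, ∀ y ∈ S, ∀ z ∈ Λ, x - y = n • z → x = y) :
    S.Finite ∧ Nat.card S ≤ n ^ Fintype.card ι := by
  let f : S → ι → ZMod n := fun x i => b.repr ⟨x, hSΛ x.2⟩ i
  have hf : f.Injective := fun x y hxy => by
    obtain ⟨z, hz⟩ := b.exists_sub_eq_nsmul_of_repr_cast_eq (congrFun hxy)
    exact Subtype.ext (hS x x.2 y y.2 z z.2 (congrArg Subtype.val hz))
  have := Finite.of_injective f hf
  refine ⟨S.toFinite, ?_⟩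
  simpa [Nat.card_fun, Nat.card_eq_fintype_card] using Nat.card_le_card_of_injective f hf

theorem four_mul_lt_sq_floor_two_mul_sqrt_add_one_mul (T : ℝ) {c : ℝ} (hc : 0 < c) :
    4 * T < ((⌊2 * √(T / c)⌋₊ + 1 : ℕ) : ℝ) ^ 2 * c := by
  set a := 2 * √(T / c)
  have ha : 0 ≤ a := by positivity
  have hTa : 4 * T ≤ a ^ 2 * c := by
    rw [mul_pow, Real.sq_sqrt']
    nlinarith [mul_le_mul_of_nonneg_right (le_max_left (T / c) 0) hc.le, div_mul_cancel₀ T hc.ne']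
  have hfloor : a ^ 2 < ((⌊a⌋₊ + 1 : ℕ) : ℝ) ^ 2 := by
    gcongr
    push_cast
    exact Nat.lt_floor_add_one a
  nlinarith

open Submodule in
theorem stmt0_general (V : Type*) [AddCommGroup V] [Module ℝ V] (r : ℕ)
    (Λ : Submodule ℤ V) (b : Module.Basis (Fin r) ℤ Λ)
    (q : QuadraticForm ℝ V) (hq : q.PosDef)
    (lam : ℝ) (hlam : IsLeast {y : ℝ | ∃ x ∈ Λ, x ≠ 0 ∧ q x = y} lam)
    (T : ℝ) :
    {x : V | x ∈ Λ ∧ q x ≤ T}.Finite ∧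
      (Nat.card {x : V | x ∈ Λ ∧ q x ≤ T} : ℝ) ≤ (2 * Real.sqrt (T / lam) + 1) ^ r := by
  obtain ⟨⟨x₀, -, hx₀, rfl⟩, hmin⟩ := hlam
  set n := ⌊2 * √(T / q x₀)⌋₊ + 1
  have hsep : ∀ x ∈ {x : V | x ∈ Λ ∧ q x ≤ T}, ∀ y ∈ {x : V | x ∈ Λ ∧ q x ≤ T}, ∀ z ∈ Λ,
      x - y = n • z → x = y := by
    rintro x ⟨-, hx⟩ y ⟨-, hy⟩ z hz hxyz
    by_contra hne
    have hz₀ : z ≠ 0 := by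
      rintro rfl
      exact hne (sub_eq_zero.mp (by simpa using hxyz))
    have hupper : q (x - y) ≤ 2 * q x + 2 * q y := by
      simpa using q.map_sub_le hq.nonneg x y
    have hlower : q (x - y) = (n : ℝ) ^ 2 * q z := by
      rw [hxyz, ← Nat.cast_smul_eq_nsmul ℝ, q.map_smul, sq, smul_eq_mul]
    have hqz : q x₀ ≤ q z := hmin ⟨z, hz, hz₀, rfl⟩
    nlinarith [four_mul_lt_sq_floor_two_mul_sqrt_add_one_mul T (hq x₀ hx₀)]
  obtain ⟨hfin, hcard⟩ :=
    Submodule.finite_and_natCard_le_of_sub_eq_nsmul b n (fun _ hx => hx.1) hsep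
  refine ⟨hfin, ?_⟩
  calc (Nat.card {x : V | x ∈ Λ ∧ q x ≤ T} : ℝ) ≤ (n : ℝ) ^ r := by
        exact_mod_cast Fintype.card_fin r ▸ hcard
    _ ≤ (2 * √(T / q x₀) + 1) ^ r := by
        gcongr
        simp only [n, Nat.cast_add_one, add_le_add_iff_right]
        exact Nat.floor_le (by positivity)

open Submodule in
/-- Lattice point counting: in an `r`-dimensional real vector space with a full-rank
lattice `Λ` and a positive definite quadratic form `q` whose minimum on nonzero lattice
points is `lam`, the number of lattice points with `q x ≤ T` is at most
`(2 * √(T/lam) + 1)^r`. -/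
theorem stmt0 (V : Type*) [AddCommGroup V] [Module ℝ V] (r : ℕ)
    (Λ : Submodule ℤ V) (b : Module.Basis (Fin r) ℤ Λ)
    (hspan : Submodule.span ℝ (Λ : Set V) = ⊤)
    (q : QuadraticForm ℝ V) (hq : q.PosDef)
    (lam : ℝ) (hlam : IsLeast {y : ℝ | ∃ x ∈ Λ, x ≠ 0 ∧ q x = y} lam)
    (T : ℝ) (hT : 0 < T) :
    {x : V | x ∈ Λ ∧ q x ≤ T}.Finite ∧
      (Nat.card {x : V | x ∈ Λ ∧ q x ≤ T} : ℝ) ≤ (2 * Real.sqrt (T / lam) + 1) ^ r :=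
  stmt0_general V r Λ b q hq lam hlam T
end

section
/- Let k be a field of odd characteristic, A ∈ k[t] squarefree, and f ∈ k[x] a cubic polynomial with no repeated roots (in an algebraic closure). If F, G ∈ k[t] satisfy A·G² = f(F) and F' ≠ 0, then G divides F' in k[t]. -/
open Polynomial

/-- If `A ∈ k[t]` is squarefree, `f ∈ k[x]` is a cubic with no repeated roots, and
`F, G ∈ k[t]` satisfy `A·G² = f(F)` with `F' ≠ 0`, then `G` divides `F'` in `k[t]`. -/
theorem stmt5 (k : Type*) [Field k] (hchar : ringChar k ≠ 2)
    (A : k[X]) (hA : Squarefree A)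
    (f : k[X]) (hf3 : f.natDegree = 3) (hfsep : f.Separable)
    (F G : k[X]) (heq : A * G ^ 2 = f.comp F) (hF' : derivative F ≠ 0) :
    G ∣ derivative F := by
  -- coprimality of f∘F and f'∘F
  have hsep : IsCoprime f (derivative f) := hfsep
  have hcop : IsCoprime (f.comp F) ((derivative f).comp F) := by
    have h := hsep.map (aeval F : k[X] →ₐ[k] k[X]).toRingHom
    simpa [← comp_eq_aeval] using h
  -- G divides f ∘ F
  have hGf : G ∣ f.comp F := by
    rw [← heq]; exact ⟨A * G, by ring⟩
  -- G is coprime to f' ∘ F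
  have hcopG : IsCoprime G ((derivative f).comp F) := hcop.of_isCoprime_of_dvd_left hGf
  -- differentiate the equation
  have hder : derivative (A * G ^ 2) = derivative F * (derivative f).comp F := by
    rw [heq, derivative_comp]
  have hGdvd : G ∣ derivative F * (derivative f).comp F := by
    rw [← hder, derivative_mul, derivative_pow]
    exact dvd_add ⟨derivative A * G, by ring⟩ ⟨A * (C 2 * derivative G), by push_cast; ring⟩
  exact hcopG.dvd_of_dvd_mul_right hGdvd
end

section
/- Let k be a finite field of odd characteristic, A ∈ k[t] squarefree of odd degree d > 1, f ∈ k[x] a separable cubic. If F, G ∈ k[t] satisfy A·G² = f(F) and F' ≠ 0, then deg F < d − 1. -/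
open Polynomial

/-- If `A ∈ k[t]` is squarefree of odd degree `d > 1`, `f ∈ k[x]` is a separable cubic,
and `F, G ∈ k[t]` satisfy `A·G² = f(F)` with `F' ≠ 0`, then `deg F < d − 1`. -/
theorem stmt6 (k : Type*) [Field k] [Finite k] (hchar : ringChar k ≠ 2)
    (A : k[X]) (hA : Squarefree A) (hAdeg : Odd A.natDegree) (hAd : 1 < A.natDegree)
    (f : k[X]) (hf3 : f.natDegree = 3) (hfsep : f.Separable)
    (F G : k[X]) (heq : A * G ^ 2 = f.comp F) (hF' : derivative F ≠ 0) :
    F.natDegree < A.natDegree - 1 := by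
  have hA0 : A ≠ 0 := hA.ne_zero
  have hFdeg : F.natDegree ≠ 0 := by
    intro h
    obtain ⟨c, rfl⟩ := natDegree_eq_zero.mp h
    simp at hF'
  have hcomp : (f.comp F).natDegree = 3 * F.natDegree := by
    rw [natDegree_comp, hf3]
  have hG0 : G ≠ 0 := by
    intro h
    rw [h] at heq
    have : f.comp F = 0 := by simpa using heq.symm
    rw [this] at hcomp
    simp at hcomp
    omega
  -- degree identity
  have hdeg : A.natDegree + 2 * G.natDegree = 3 * F.natDegree := by
    have := congrArg natDegree heq
    rw [natDegree_mul hA0 (pow_ne_zero 2 hG0), natDegree_pow, hcomp] at this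
    omega
  -- coprimality of f(F) and f'(F)
  have hcop : IsCoprime (f.comp F) ((derivative f).comp F) := by
    have h := IsCoprime.map hfsep (eval₂RingHom (C : k →+* k[X]) F)
    simpa [coe_eval₂RingHom, comp] using h
  -- G divides f'(F) * F'
  have hder : G ∣ derivative F * (derivative f).comp F := by
    have h := congrArg derivative heq
    norm_num [derivative_comp, derivative_mul, derivative_pow] at h
    exact ⟨derivative A * G + A * (C 2 * derivative G), by linear_combination -h⟩
  have hGf : G ∣ f.comp F := ⟨A * G, by rw [← heq]; ring⟩
  have hGcop : IsCoprime G ((derivative f).comp F) :=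
    hcop.of_isCoprime_of_dvd_left hGf
  have hGF' : G ∣ derivative F := hGcop.dvd_of_dvd_mul_right hder
  have hGle : G.natDegree ≤ F.natDegree - 1 :=
    le_trans (natDegree_le_of_dvd hGF' hF') (natDegree_derivative_le F)
  omega
end

section
/- Let k be a field of odd characteristic, A ∈ k[t] squarefree of odd degree d > 1 with A'(t) = γ a nonzero constant, and f(x) = (x−α₀)(x−α₁)(x−α₂) ∈ k[x] with distinct roots α₀, α₁, α₂. Suppose (F,G) ∈ k[t]² satisfies A·G² = f(F), F' ≠ 0, and 2·deg G ≤ deg F − 1. Then there exists β ∈ k* with G² = β·F'. -/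
set_option maxHeartbeats 1000000


open Polynomial

/-- If `A' = γ` is a nonzero constant, `f = (x−α₀)(x−α₁)(x−α₂)` has distinct roots, and
`(F, G)` is a separable integral point on `A(t)y² = f(x)` with `2·deg G ≤ deg F − 1`,
then `G² = β·F'` for some `β ∈ k*`. -/
theorem stmt11 (k : Type*) [Field k] (hchar : ringChar k ≠ 2)
    (A : k[X]) (hA : Squarefree A) (hAdeg : Odd A.natDegree) (hAd : 1 < A.natDegree)
    (γ : k) (hγ : γ ≠ 0) (hA' : derivative A = C γ)
    (α₀ α₁ α₂ : k) (h01 : α₀ ≠ α₁) (h02 : α₀ ≠ α₂) (h12 : α₁ ≠ α₂)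
    (f : k[X]) (hf : f = (X - C α₀) * (X - C α₁) * (X - C α₂))
    (F G : k[X]) (heq : A * G ^ 2 = f.comp F) (hF' : derivative F ≠ 0)
    (hdeg : 2 * G.natDegree ≤ F.natDegree - 1) :
    ∃ β : k, β ≠ 0 ∧ G ^ 2 = C β * derivative F := by
  classical
  have hA0 : A ≠ 0 := hA.ne_zero
  have hm0 : F.natDegree ≠ 0 := by
    intro h
    exact hF' (by rw [Polynomial.eq_C_of_natDegree_eq_zero h, derivative_C])
  have hcomp : f.comp F = (F - C α₀) * (F - C α₁) * (F - C α₂) := by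
    rw [hf]; simp only [mul_comp, sub_comp, X_comp, C_comp]
  have hG0 : G ≠ 0 := by
    intro h
    have h0 : (F - C α₀) * (F - C α₁) * (F - C α₂) = 0 := by
      rw [← hcomp, ← heq, h]; ring
    rcases mul_eq_zero.1 h0 with h0 | h0
    · rcases mul_eq_zero.1 h0 with h0 | h0
      · exact hm0 (by rw [sub_eq_zero.1 h0, natDegree_C])
      · exact hm0 (by rw [sub_eq_zero.1 h0, natDegree_C])
    · exact hm0 (by rw [sub_eq_zero.1 h0, natDegree_C])
  have hXsubC0 : ∀ a : k, (X - C a) ≠ 0 := fun a => X_sub_C_ne_zero a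
  have hf3 : f.natDegree = 3 := by
    rw [hf, natDegree_mul (mul_ne_zero (hXsubC0 α₀) (hXsubC0 α₁)) (hXsubC0 α₂),
      natDegree_mul (hXsubC0 α₀) (hXsubC0 α₁), natDegree_X_sub_C, natDegree_X_sub_C,
      natDegree_X_sub_C]
  -- degree identity: deg A + 2 deg G = 3 deg F
  have hd : A.natDegree + 2 * G.natDegree = 3 * F.natDegree := by
    have := congrArg natDegree heq
    rwa [natDegree_mul hA0 (pow_ne_zero 2 hG0), natDegree_pow, natDegree_comp, hf3] at this
  -- differentiate the main equation
  have h2 : C γ * G ^ 2 + A * (C 2 * G * derivative G)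
      = (derivative f).comp F * derivative F := by
    have h := congrArg derivative heq
    rwa [derivative_mul, derivative_sq, hA', derivative_comp, mul_comm (derivative F)] at h
  -- f is separable, hence f(F) and f'(F) are coprime
  have hsep : IsCoprime f (derivative f) := by
    have c01 : IsCoprime (X - C α₀) (X - C α₁) :=
      isCoprime_X_sub_C_of_isUnit_sub (sub_ne_zero_of_ne h01).isUnit
    have c02 : IsCoprime (X - C α₀) (X - C α₂) :=
      isCoprime_X_sub_C_of_isUnit_sub (sub_ne_zero_of_ne h02).isUnit
    have c12 : IsCoprime (X - C α₁) (X - C α₂) :=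
      isCoprime_X_sub_C_of_isUnit_sub (sub_ne_zero_of_ne h12).isUnit
    have : f.Separable := by
      rw [hf]
      exact ((separable_X_sub_C.mul separable_X_sub_C c01).mul separable_X_sub_C
        (c02.mul_left c12))
    exact this
  have hcop : IsCoprime (f.comp F) ((derivative f).comp F) := by
    obtain ⟨u, v, huv⟩ := hsep
    refine ⟨u.comp F, v.comp F, ?_⟩
    have := congrArg (fun p : k[X] => p.comp F) huv
    simpa only [add_comp, mul_comp, one_comp] using this
  have hGf : G ∣ f.comp F := ⟨A * G, by rw [← heq]; ring⟩
  have hcopG : IsCoprime G ((derivative f).comp F) :=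
    hcop.of_isCoprime_of_dvd_left hGf
  -- G divides F'
  have hGdvd : G ∣ derivative F := by
    apply hcopG.dvd_of_dvd_mul_left
    refine ⟨C γ * G + C 2 * A * derivative G, ?_⟩
    rw [← h2]; ring
  obtain ⟨E, hE⟩ := hGdvd
  have hE0 : E ≠ 0 := by
    intro h; exact hF' (by rw [hE, h, mul_zero])
  -- the key identity  f'(F) * E = γ G + 2 A G'
  have h2' : (derivative f).comp F * E = C γ * G + C 2 * A * derivative G := by
    apply mul_left_cancel₀ hG0
    have : G * ((derivative f).comp F * E) = (derivative f).comp F * derivative F := by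
      rw [hE]; ring
    rw [this, ← h2]; ring
  -- for each root α, (F - C α) divides f'(F) - f'(α)
  have hS : ∀ α : k, (F - C α) ∣
      ((derivative f).comp F - C (eval α (derivative f))) := by
    intro α
    have h := X_sub_C_dvd_sub_C_eval (a := α) (p := derivative f)
    have h2 := map_dvd (aeval F) h
    simpa only [map_sub, aeval_X, aeval_C, algebraMap_eq, ← comp_eq_aeval] using h2
  -- final step from a vanishing combination
  have final : ∀ α : k, C (eval α (derivative f)) * E - C γ * G = 0 →
      ∃ β : k, β ≠ 0 ∧ G ^ 2 = C β * derivative F := by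
    intro α hzero
    have hc0 : eval α (derivative f) ≠ 0 := by
      intro h
      rw [h, C_0, zero_mul, sub_eq_zero] at hzero
      exact hG0 (by
        have := hzero.symm
        rcases mul_eq_zero.1 this with h' | h'
        · exact absurd h' (C_ne_zero.2 hγ)
        · exact h')
    refine ⟨eval α (derivative f) * γ⁻¹, mul_ne_zero hc0 (inv_ne_zero hγ), ?_⟩
    apply mul_left_cancel₀ (C_ne_zero.2 hγ)
    have hkey : C (eval α (derivative f)) * E = C γ * G := sub_eq_zero.1 hzero
    calc C γ * G ^ 2 = (C γ * G) * G := by ring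
      _ = (C (eval α (derivative f)) * E) * G := by rw [hkey]
      _ = C (eval α (derivative f)) * derivative F := by rw [hE]; ring
      _ = C γ * (C (eval α (derivative f) * γ⁻¹) * derivative F) := by
          have hγγ : (C γ : k[X]) * C (eval α (derivative f) * γ⁻¹) = C (eval α (derivative f)) := by
            rw [← C_mul]
            congr 1
            field_simp
          calc C (eval α (derivative f)) * derivative F
              = (C γ * C (eval α (derivative f) * γ⁻¹)) * derivative F := by rw [hγγ]
            _ = C γ * (C (eval α (derivative f) * γ⁻¹) * derivative F) := by ring
  -- divisibility: A ∣ ∏ (f'(αᵢ) E - γ G)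
  obtain ⟨W₀, hW₀⟩ := hS α₀
  obtain ⟨W₁, hW₁⟩ := hS α₁
  obtain ⟨W₂, hW₂⟩ := hS α₂
  set R : k → k[X] := fun α => C (eval α (derivative f)) * E - C γ * G with hRdef
  have hR : ∀ α : k, R α = C 2 * A * derivative G -
      ((derivative f).comp F - C (eval α (derivative f))) * E := by
    intro α
    simp only [hRdef]
    linear_combination h2'
  have hAdvd : A ∣ R α₀ * R α₁ * R α₂ := by
    rw [← Ideal.mem_span_singleton (α := k[X]), ← Ideal.Quotient.eq_zero_iff_mem,
      map_mul, map_mul]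
    set π := Ideal.Quotient.mk (Ideal.span {A}) with hπ
    have hπA : π A = 0 := by
      rw [hπ, Ideal.Quotient.eq_zero_iff_mem]
      exact Ideal.subset_span rfl
    have eπ : ∀ α W, (derivative f).comp F - C (eval α (derivative f)) = (F - C α) * W →
        π (R α) = -(π (F - C α) * π W * π E) := by
      intro α W hW
      rw [hR α, hW]
      simp only [map_sub, map_mul, hπA]
      ring
    rw [eπ α₀ W₀ hW₀, eπ α₁ W₁ hW₁, eπ α₂ W₂ hW₂]
    have hprod : (F - C α₀) * (F - C α₁) * (F - C α₂) * (W₀ * W₁ * W₂)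
        = A * (G ^ 2 * (W₀ * W₁ * W₂)) := by
      rw [← hcomp, ← heq]; ring
    have hz : π ((F - C α₀) * (F - C α₁) * (F - C α₂) * (W₀ * W₁ * W₂)) = 0 := by
      rw [hprod, map_mul, hπA, zero_mul]
    have hz' : π (F - C α₀) * π (F - C α₁) * π (F - C α₂) * (π W₀ * π W₁ * π W₂) = 0 := by
      simpa only [map_mul] using hz
    linear_combination (-(π E * π E * π E)) * hz'
  -- case analysis: some factor must vanish, else degrees contradict
  by_cases hz0 : R α₀ = 0
  · exact final α₀ hz0
  by_cases hz1 : R α₁ = 0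
  · exact final α₁ hz1
  by_cases hz2 : R α₂ = 0
  · exact final α₂ hz2
  exfalso
  -- degree bounds
  have hdegF' : (derivative F).natDegree < F.natDegree := natDegree_derivative_lt hm0
  have hdegE : E.natDegree + G.natDegree < F.natDegree := by
    rw [hE, natDegree_mul hG0 hE0] at hdegF'
    omega
  have hgm : 2 * G.natDegree + 1 ≤ F.natDegree := by omega
  have hRub : ∀ α : k, (R α).natDegree + G.natDegree + 1 ≤ F.natDegree := by
    intro α
    have h1 : (R α).natDegree ≤ max (C (eval α (derivative f)) * E).natDegree
        (C γ * G).natDegree := natDegree_sub_le _ _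
    have h2 : (C (eval α (derivative f)) * E).natDegree ≤ E.natDegree :=
      natDegree_C_mul_le _ _
    have h3 : (C γ * G).natDegree ≤ G.natDegree := natDegree_C_mul_le _ _
    have : (R α).natDegree ≤ max E.natDegree G.natDegree := by
      exact h1.trans (max_le_max h2 h3)
    rcases max_cases E.natDegree G.natDegree with ⟨hm, _⟩ | ⟨hm, _⟩ <;> rw [hm] at this <;> omega
  have hne : R α₀ * R α₁ * R α₂ ≠ 0 := mul_ne_zero (mul_ne_zero hz0 hz1) hz2
  have hdA : A.natDegree ≤ (R α₀ * R α₁ * R α₂).natDegree :=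
    natDegree_le_of_dvd hAdvd hne
  rw [natDegree_mul (mul_ne_zero hz0 hz1) hz2, natDegree_mul hz0 hz1] at hdA
  have b0 := hRub α₀
  have b1 := hRub α₁
  have b2 := hRub α₂
  omega
end

section
/- Let k be a field of odd characteristic, A ∈ k[t] squarefree, f ∈ k[x] a separable cubic, F, G ∈ k[t] with A·G² = f(F) and F' ≠ 0, and suppose β is a root of G in an algebraic closure of k with multiplicity r. Then (t − β)^r divides F'. -/
open Polynomial

/-- If `A ∈ k[t]` is squarefree, `f` is a separable cubic, `A·G² = f(F)` with `F' ≠ 0`,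
and `β` is a root of `G` in an algebraic closure of `k` of multiplicity `r`, then
`(t − β)^r` divides `F'` (over the algebraic closure). -/
theorem stmt16 (k : Type*) [Field k] (hchar : ringChar k ≠ 2)
    (A : k[X]) (hA : Squarefree A)
    (f : k[X]) (hf3 : f.natDegree = 3) (hfsep : f.Separable)
    (F G : k[X]) (heq : A * G ^ 2 = f.comp F) (hF' : derivative F ≠ 0)
    (β : AlgebraicClosure k)
    (hβ : (G.map (algebraMap k (AlgebraicClosure k))).IsRoot β)
    (r : ℕ) (hr : r = (G.map (algebraMap k (AlgebraicClosure k))).rootMultiplicity β) :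
    (X - C β) ^ r ∣ (derivative F).map (algebraMap k (AlgebraicClosure k)) := by
  classical
  set φ := algebraMap k (AlgebraicClosure k) with hφ
  subst hr
  by_cases hr0 : (G.map φ).rootMultiplicity β = 0
  · simp [hr0]
  set r := (G.map φ).rootMultiplicity β with hrdef
  have hr1 : 1 ≤ r := Nat.one_le_iff_ne_zero.mpr hr0
  have hpr : (X - C β) ^ r ∣ G.map φ := (G.map φ).pow_rootMultiplicity_dvd β
  have heqK : A.map φ * (G.map φ) ^ 2 = (f.map φ).comp (F.map φ) := by
    have := congrArg (Polynomial.map φ) heq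
    simp only [Polynomial.map_mul, Polynomial.map_pow, Polynomial.map_comp] at this
    exact this
  -- (X - C β) divides f∘F over K
  have hp_fF : (X - C β) ∣ (f.map φ).comp (F.map φ) := by
    rw [← heqK]
    exact Dvd.dvd.mul_left (dvd_pow ((dvd_pow_self _ hr0).trans hpr) two_ne_zero) _
  -- (X - C β)^r divides derivative (f∘F)
  have hdvd_der : (X - C β) ^ r ∣ derivative ((f.map φ).comp (F.map φ)) := by
    rw [← heqK, derivative_mul, derivative_pow]
    refine dvd_add (Dvd.dvd.mul_left (dvd_pow hpr two_ne_zero) _) ?_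
    exact Dvd.dvd.mul_left (Dvd.dvd.mul_right (Dvd.dvd.mul_left (by simpa using hpr) _) _) _
  rw [derivative_comp] at hdvd_der
  -- coprimality of (X - C β) with f'∘F
  have hsepK : (f.map φ).Separable := hfsep.map
  obtain ⟨a, b, hab⟩ := hsepK
  have hcop1 : a.comp (F.map φ) * (f.map φ).comp (F.map φ)
      + b.comp (F.map φ) * (derivative (f.map φ)).comp (F.map φ) = 1 := by
    have := congrArg (fun p => p.comp (F.map φ)) hab
    simpa [add_comp, mul_comp, one_comp] using this
  have hnd : ¬ (X - C β) ∣ (derivative (f.map φ)).comp (F.map φ) := by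
    intro hd
    have : (X - C β) ∣ (1 : (AlgebraicClosure k)[X]) := by
      rw [← hcop1]
      exact dvd_add (Dvd.dvd.mul_left hp_fF _) (Dvd.dvd.mul_left hd _)
    exact Polynomial.not_isUnit_X_sub_C β (isUnit_of_dvd_one this)
  have hprime : Prime (X - C β : (AlgebraicClosure k)[X]) := Polynomial.prime_X_sub_C β
  have hcop : IsCoprime ((X - C β : (AlgebraicClosure k)[X]) ^ r)
      ((derivative (f.map φ)).comp (F.map φ)) :=
    ((hprime.coprime_iff_not_dvd).mpr hnd).pow_left
  have : (X - C β) ^ r ∣ derivative (F.map φ) :=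
    hcop.dvd_of_dvd_mul_right hdvd_der
  rwa [derivative_map] at this
end
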